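/- For any positive time steps τ_1, …, τ_N, the DOC kernels have the explicit formula θ^{(n)}_{n−k} = (1/b^{(k)}_0) · ∏_{i=k+1}^n r_i²/(1+2r_i) = (τ_n/(b^{(k)}_0 τ_k)) · ∏_{i=k+1}^n r_i/(1+2r_i) for all 1 ≤ k ≤ n ≤ N (empty products being 1). In particular θ^{(n)}_{n−k} > 0. -/

import Mathlib

open Finset

/-- BDF2 convolution kernels `b^{(n)}_j` built from the step sizes `τ`. -/
noncomputable def bdf2 (τ : ℕ → ℝ) (n j : ℕ) : ℝ :=
  if n = 1 then (if j = 0 then 1 / τ 1 else 0)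
  else if j = 0 then (1 + 2 * (τ n / τ (n - 1))) / (τ n * (1 + τ n / τ (n - 1)))
  else if j = 1 then -(τ n / τ (n - 1)) ^ 2 / (τ n * (1 + τ n / τ (n - 1)))
  else 0

/-- DOC kernels: `doc τ n g = θ^{(n)}_g`, defined by the recursive procedure
`θ^{(n)}_0 = 1/b^{(n)}_0`, `θ^{(n)}_{n-k} = -(1/b^{(k)}_0) ∑_{j=k+1}^n θ^{(n)}_{n-j} b^{(j)}_{j-k}`. -/
noncomputable def doc (τ : ℕ → ℝ) (n : ℕ) : ℕ → ℝ
  | 0 => 1 / bdf2 τ n 0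
  | (g + 1) =>
    -(1 / bdf2 τ (n - (g + 1)) 0) *
      ∑ i ∈ (Finset.range (g + 1)).attach,
        doc τ n i.1 * bdf2 τ (n - i.1) (g + 1 - i.1)
  decreasing_by exact Finset.mem_range.mp i.2

/-- The variable-step BDF2 formula `D_2 v^n = ∑_{k=1}^n b^{(n)}_{n-k} (v^k - v^{k-1})`. -/
noncomputable def D2 {V : Type*} [AddCommGroup V] [Module ℝ V]
    (τ : ℕ → ℝ) (v : ℕ → V) (n : ℕ) : V :=
  ∑ k ∈ Finset.Icc 1 n, bdf2 τ n (n - k) • (v k - v (k - 1))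

/-- Time levels `t_n = τ_1 + ⋯ + τ_n`. -/
noncomputable def tlv (τ : ℕ → ℝ) (n : ℕ) : ℝ := ∑ i ∈ Finset.Icc 1 n, τ i

/-!
Since `b^{(j)}_i = 0` for `i ≥ 2`, the recursion defining `θ^{(n)}_{n-k}` keeps only its
`j = k + 1` term: `θ^{(n)}_{n-k} = -(b^{(k+1)}_1 / b^{(k)}_0) θ^{(n)}_{n-k-1}`. Unrolling it down to
`θ^{(n)}_0 = 1/b^{(n)}_0` gives `1/b^{(k)}_0` times the product of the positive ratios
`-b^{(i)}_1/b^{(i)}_0 = r_i²/(1+2r_i)` over `k < i ≤ n`; the second form follows from the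
telescoping product `∏ r_i = τ_n/τ_k`.
-/

lemma bdf2_eq_zero_of_two_le (τ : ℕ → ℝ) (n : ℕ) {j : ℕ} (hj : 2 ≤ j) : bdf2 τ n j = 0 := by
  unfold bdf2
  simp [show j ≠ 0 by omega, show j ≠ 1 by omega]

lemma bdf2_zero_pos (τ : ℕ → ℝ) {k : ℕ} (hk : 1 ≤ k) (hτ : ∀ i, 1 ≤ i → i ≤ k → 0 < τ i) :
    0 < bdf2 τ k 0 := by
  unfold bdf2
  by_cases h1 : k = 1
  · subst h1
    simpa using hτ 1 le_rfl le_rfl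
  · have hτk := hτ k hk le_rfl
    have hr : 0 < τ k / τ (k - 1) := div_pos hτk (hτ (k - 1) (by omega) (by omega))
    simp only [h1, if_false, if_true]
    positivity

lemma neg_bdf2_one_div_bdf2_zero (τ : ℕ → ℝ) {n : ℕ} (hn : 2 ≤ n) (hτn : 0 < τ n)
    (hτn' : 0 < τ (n - 1)) :
    -bdf2 τ n 1 / bdf2 τ n 0 = (τ n / τ (n - 1)) ^ 2 / (1 + 2 * (τ n / τ (n - 1))) := by
  have hr : 0 < τ n / τ (n - 1) := div_pos hτn hτn'
  unfold bdf2
  simp only [show n ≠ 1 by omega, if_false, if_true, one_ne_zero]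
  field_simp

lemma doc_succ (τ : ℕ → ℝ) (n g : ℕ) :
    doc τ n (g + 1) = -(1 / bdf2 τ (n - (g + 1)) 0) * (doc τ n g * bdf2 τ (n - g) 1) := by
  rw [doc, sum_attach (range (g + 1)) fun i => doc τ n i * bdf2 τ (n - i) (g + 1 - i),
    sum_range_succ, sum_eq_zero fun i hi => ?_, zero_add, Nat.add_sub_cancel_left]
  rw [bdf2_eq_zero_of_two_le τ _ (by have := mem_range.mp hi; omega), mul_zero]

theorem doc_eq_prod (τ : ℕ → ℝ) {n k : ℕ} (hkn : k ≤ n) :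
    doc τ n (n - k) = (1 / bdf2 τ k 0) * ∏ i ∈ Icc (k + 1) n, (-bdf2 τ i 1 / bdf2 τ i 0) := by
  induction hkn using Nat.decreasingInduction with
  | self => simp [doc]
  | of_succ k hkn ih =>
    rw [show n - k = (n - (k + 1)) + 1 by omega, doc_succ,
      show n - (n - (k + 1) + 1) = k by omega, show n - (n - (k + 1)) = k + 1 by omega, ih,
      ← insert_Icc_add_one_left_eq_Icc (by omega : k + 1 ≤ n), prod_insert (by simp)]
    ring

lemma prod_Icc_div_pred (τ : ℕ → ℝ) {k n : ℕ} (hkn : k ≤ n) (hτ : ∀ i, k ≤ i → i ≤ n → τ i ≠ 0) :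
    ∏ i ∈ Icc (k + 1) n, τ i / τ (i - 1) = τ n / τ k := by
  induction n, hkn using Nat.le_induction with
  | base => simp [div_self (hτ k le_rfl le_rfl)]
  | succ n hkn ih =>
    rw [prod_Icc_succ_top (by omega), ih fun i hki hin => hτ i hki (by omega),
      Nat.add_sub_cancel]
    field_simp [hτ n hkn (by omega)]

/-- explicit formula for the DOC kernels and their positivity. -/
theorem doc_explicit_formula
    (N : ℕ) (τ : ℕ → ℝ) (hτ : ∀ k, 1 ≤ k → k ≤ N → 0 < τ k) :
    ∀ n k, 1 ≤ k → k ≤ n → n ≤ N →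
      doc τ n (n - k) =
          (1 / bdf2 τ k 0) *
            ∏ i ∈ Finset.Icc (k + 1) n,
              (τ i / τ (i - 1)) ^ 2 / (1 + 2 * (τ i / τ (i - 1))) ∧
        doc τ n (n - k) =
          (τ n / (bdf2 τ k 0 * τ k)) *
            ∏ i ∈ Finset.Icc (k + 1) n,
              (τ i / τ (i - 1)) / (1 + 2 * (τ i / τ (i - 1))) ∧
        0 < doc τ n (n - k) := by
  intro n k hk hkn hn
  have hratio : ∀ i ∈ Icc (k + 1) n, 0 < τ i / τ (i - 1) := fun i hi => by
    have := mem_Icc.mp hi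
    exact div_pos (hτ i (by omega) (by omega)) (hτ (i - 1) (by omega) (by omega))
  have hformula : doc τ n (n - k) = (1 / bdf2 τ k 0) *
      ∏ i ∈ Icc (k + 1) n, (τ i / τ (i - 1)) ^ 2 / (1 + 2 * (τ i / τ (i - 1))) := by
    rw [doc_eq_prod τ hkn]
    congr 1
    refine prod_congr rfl fun i hi => ?_
    have := mem_Icc.mp hi
    exact neg_bdf2_one_div_bdf2_zero τ (by omega) (hτ i (by omega) (by omega))
      (hτ (i - 1) (by omega) (by omega))
  refine ⟨hformula, ?_, ?_⟩
  · rw [hformula, prod_congr rfl fun i _ => by rw [sq, mul_div_assoc], prod_mul_distrib,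
      prod_Icc_div_pred τ hkn fun i hki hin => (hτ i (by omega) (by omega)).ne']
    ring
  · rw [hformula]
    have hb := bdf2_zero_pos τ hk fun i hi hik => hτ i hi (by omega)
    exact mul_pos (one_div_pos.mpr hb) (prod_pos fun i hi => by have := hratio i hi; positivity)
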